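/- Conversely, if a connected graph with positive edge weights has a nonzero vector u with (D + A)u = 0, then the graph is bipartite: the sets {i : u_i > 0} and {i : u_i < 0} form a bipartition and u vanishes nowhere. -/
import Mathlib


open Matrix

/-- If a connected graph with nonnegative weights has a nonzero vector
u with (D + A)u = 0, then the graph is bipartite: u vanishes nowhere and the sets
{i : u_i > 0}, {i : u_i < 0} form a bipartition (every positive edge joins the two
sets). -/
theorem stmt_12 (N : ℕ) (A : Matrix (Fin N) (Fin N) ℝ)
    (hA : A.IsSymm) (hnonneg : ∀ i j, 0 ≤ A i j) (hdiag : ∀ i, A i i = 0)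
    (hconn : ∀ i j : Fin N, Relation.ReflTransGen (fun a b => 0 < A a b) i j)
    (D : Matrix (Fin N) (Fin N) ℝ)
    (hD : D = Matrix.diagonal (fun i => ∑ j, A i j))
    (u : Fin N → ℝ) (hu0 : u ≠ 0)
    (hker : (D + A) *ᵥ u = 0) :
    (∀ i, u i ≠ 0) ∧ (∀ i j, 0 < A i j → (0 < u i ↔ u j < 0)) := by
  -- key identity: ∑ j, A i j * (u i + u j) = 0
  have key : ∀ i, ∑ j, A i j * (u i + u j) = 0 := by
    intro i
    have h := congrFun hker i
    simp only [Matrix.add_mulVec, Pi.add_apply, hD, Matrix.mulVec_diagonal,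
      Pi.zero_apply] at h
    have : ∑ j, A i j * (u i + u j)
        = (∑ j, A i j) * u i + (A *ᵥ u) i := by
      simp [Matrix.mulVec, dotProduct, mul_add, Finset.sum_add_distrib,
        Finset.sum_mul]
    rw [this, h]
  -- u is nonzero somewhere
  obtain ⟨i0, hi0⟩ := Function.ne_iff.mp hu0
  haveI : Nonempty (Fin N) := ⟨i0⟩
  set M : ℝ := Finset.univ.sup' Finset.univ_nonempty (fun i => |u i|) with hM
  have hMle : ∀ i, |u i| ≤ M := fun i =>
    Finset.le_sup' (fun i => |u i|) (Finset.mem_univ i)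
  obtain ⟨im, -, hime⟩ := Finset.exists_mem_eq_sup' Finset.univ_nonempty
    (fun i => |u i|)
  have hMpos : 0 < M := by
    have := hMle i0
    have h0 : 0 < |u i0| := abs_pos.mpr hi0
    linarith
  -- propagation step
  have step : ∀ i, |u i| = M → ∀ j, 0 < A i j → u j = -u i := by
    intro i hiM j hij
    rcases abs_eq (le_of_lt hMpos) |>.mp hiM with h | h
    · -- u i = M
      have hterm : ∀ k ∈ Finset.univ, 0 ≤ A i k * (u i + u k) := by
        intro k _
        apply mul_nonneg (hnonneg i k)
        have := (abs_le.mp (le_of_eq_of_le rfl (hMle k))).1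
        linarith
      have hz := (Finset.sum_eq_zero_iff_of_nonneg hterm).mp (key i) j
        (Finset.mem_univ j)
      rcases mul_eq_zero.mp hz with hz | hz
      · exact absurd hz (ne_of_gt hij)
      · linarith
    · -- u i = -M
      have hterm : ∀ k ∈ Finset.univ, 0 ≤ A i k * (-(u i + u k)) := by
        intro k _
        apply mul_nonneg (hnonneg i k)
        have := (abs_le.mp (le_of_eq_of_le rfl (hMle k))).2
        linarith
      have hsum : ∑ k, A i k * (-(u i + u k)) = 0 := by
        simp only [mul_neg, Finset.sum_neg_distrib, key i, neg_zero]
      have hz := (Finset.sum_eq_zero_iff_of_nonneg hterm).mp hsum j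
        (Finset.mem_univ j)
      rcases mul_eq_zero.mp hz with hz | hz
      · exact absurd hz (ne_of_gt hij)
      · linarith
  -- all vertices have |u i| = M
  have allM : ∀ i, |u i| = M := by
    intro i
    have hc := hconn im i
    induction hc with
    | refl => exact hime.symm
    | tail _ hedge ih =>
        rename_i b c _
        have := step b ih c hedge
        rw [this, abs_neg, ih]
  have hne : ∀ i, u i ≠ 0 := by
    intro i h
    have := allM i
    rw [h, abs_zero] at this
    exact absurd this.symm (ne_of_gt hMpos)
  refine ⟨hne, fun i j hij => ?_⟩
  constructor
  · intro hpos
    have := step i (allM i) j hij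
    rw [this]; linarith
  · intro hneg
    have hji : 0 < A j i := by
      have := hA.apply i j
      simpa [this] using hij
    have := step j (allM j) i hji
    rw [this]; linarith
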